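/- arXiv:cs/9901016 — 2 statements merged into one kernel-verified Lean document; each statement's English description precedes it below -/
import Mathlib

section
/- For every default theory Δ over a propositional language L there exists a prerequisite-free default theory Δ' over L that is equivalent to Δ, i.e., ext(Δ') = ext(Δ). -/
/-- Propositional formulas over a set of atoms `α`. -/
inductive PropForm (α : Type) : Type
  | atom : α → PropForm α
  | fls  : PropForm α
  | impl : PropForm α → PropForm α → PropForm α

namespace PropForm

/-- Negation `¬φ`, definable as `φ → ⊥`. -/
def neg {α : Type} (φ : PropForm α) : PropForm α := impl φ fls

/-- Conjunction, definable from implication and falsum. -/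
def conj {α : Type} (φ ψ : PropForm α) : PropForm α := (φ.impl ψ.neg).neg

/-- Biimplication `φ ↔ ψ`. -/
def biimp {α : Type} (φ ψ : PropForm α) : PropForm α := conj (φ.impl ψ) (ψ.impl φ)

/-- Evaluation of a formula under a valuation of the atoms. -/
def eval {α : Type} (v : α → Prop) : PropForm α → Prop
  | atom a   => v a
  | fls      => False
  | impl φ ψ => eval v φ → eval v ψ

/-- Renaming/embedding of atoms. -/
def map {α β : Type} (f : α → β) : PropForm α → PropForm β
  | atom a   => atom (f a)
  | fls      => fls
  | impl φ ψ => impl (map f φ) (map f ψ)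

end PropForm

/-- Classical propositional consequence operator. -/
def Cn {α : Type} (S : Set (PropForm α)) : Set (PropForm α) :=
  {φ | ∀ v : α → Prop, (∀ ψ ∈ S, ψ.eval v) → φ.eval v}

/-- A theory: a set of formulas closed under propositional consequence. -/
def IsTheory {α : Type} (S : Set (PropForm α)) : Prop := Cn S ⊆ S

/-- A set of formulas is consistent if its consequences are not the whole language. -/
def Consistent {α : Type} (S : Set (PropForm α)) : Prop := Cn S ≠ Set.univ

/-- A default `α : Γ / β` with prerequisite, finite set of justifications, consequent. -/
structure Default (α : Type) where
  pre : PropForm α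
  jus : Finset (PropForm α)
  con : PropForm α

/-- A default is applicable w.r.t. `S` if no justification's negation follows from `S`. -/
def Default.Applicable {α : Type} (S : Set (PropForm α)) (d : Default α) : Prop :=
  ∀ γ ∈ d.jus, γ.neg ∉ Cn S

/-- The reduct of `D` w.r.t. `S`: the monotone rules `pre/con` of `S`-applicable defaults. -/
def Reduct {α : Type} (D : Set (Default α)) (S : Set (PropForm α)) :
    Set (PropForm α × PropForm α) :=
  {r | ∃ d ∈ D, d.Applicable S ∧ r = (d.pre, d.con)}

/-- `Cn^B(W)`: consequences of `W` in propositional calculus augmented with rules `B`;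
the least set containing `W`, closed under `Cn`, and closed under the rules of `B`. -/
def CnRules {α : Type} (B : Set (PropForm α × PropForm α)) (W : Set (PropForm α)) :
    Set (PropForm α) :=
  ⋂₀ {S | W ⊆ S ∧ Cn S ⊆ S ∧ ∀ r ∈ B, r.1 ∈ S → r.2 ∈ S}

/-- `S` is an extension of the default theory `(D, W)`. -/
def IsExtension {α : Type} (D : Set (Default α)) (W S : Set (PropForm α)) : Prop :=
  S = CnRules (Reduct D S) W

/-- The family of all extensions of `(D, W)`. -/
def ext {α : Type} (D : Set (Default α)) (W : Set (PropForm α)) : Set (Set (PropForm α)) :=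
  {S | IsExtension D W S}

/-- A default is prerequisite-free if its prerequisite is a tautology. -/
def Default.PrereqFree {α : Type} (d : Default α) : Prop :=
  d.pre ∈ Cn (∅ : Set (PropForm α))

/-- A default is normal if it has the form `α : {β} / β`. -/
def Default.Normal {α : Type} (d : Default α) : Prop := d.jus = {d.con}

/-! `D` is replaced by the defaults `⊤ : J(l) / φ`, one for each grounded chain `l` of defaults of
`D` (every prerequisite follows from `W` and the consequents of the earlier defaults) and each
consequent `φ` of `l`, where `J(l)` pools the justifications of `l`. For every theory `T`, both
`Cn^{D_T}(W)` and `Cn^{D'_T}(W)` are `Cn(W ∪ G)`, with `G` the consequents of the `T`-applicable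
grounded chains. On the side of `D` this uses compactness: a prerequisite that follows from `G`
follows from finitely many chains, and these concatenate into a single one. -/

namespace PropForm

variable {α : Type}

def verum : PropForm α := fls.neg

def boolModels (φ : PropForm α) : Set (α → Bool) := {v | φ.eval fun a => v a = true}

theorem isClopen_boolModels : ∀ φ : PropForm α, IsClopen φ.boolModels
  | atom a => (isClopen_discrete {true}).preimage (continuous_apply a)
  | fls => isClopen_empty
  | impl φ ψ => by
    have h : (impl φ ψ).boolModels = φ.boolModelsᶜ ∪ ψ.boolModels := by
      ext v; simp [boolModels, eval, imp_iff_not_or]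
    rw [h]
    exact (isClopen_boolModels φ).compl.union (isClopen_boolModels ψ)

end PropForm

open PropForm

section Consequence

variable {α : Type}

theorem subset_Cn (X : Set (PropForm α)) : X ⊆ Cn X := fun φ hφ _ hv => hv φ hφ

theorem Cn_mono {X Y : Set (PropForm α)} (h : X ⊆ Y) : Cn X ⊆ Cn Y :=
  fun _ hφ v hv => hφ v fun ψ hψ => hv ψ (h hψ)

theorem Cn_Cn_subset (X : Set (PropForm α)) : Cn (Cn X) ⊆ Cn X :=
  fun _ hφ v hv => hφ v fun _ hψ => hψ v hv

theorem verum_mem_Cn (X : Set (PropForm α)) : (verum : PropForm α) ∈ Cn X := fun _ _ h => h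

/-- Compactness, via Tychonoff for the space `α → Bool` of valuations. -/
theorem exists_finset_of_mem_Cn {X : Set (PropForm α)} {φ : PropForm α} (h : φ ∈ Cn X) :
    ∃ Y : Finset (PropForm α), ↑Y ⊆ X ∧ φ ∈ Cn (Y : Set (PropForm α)) := by
  have hcover : (φ.boolModelsᶜ ∩ ⋂ ψ : X, (ψ : PropForm α).boolModels) = ∅ :=
    Set.eq_empty_of_forall_notMem fun v ⟨hφ, hX⟩ =>
      hφ (h _ fun ψ hψ => Set.mem_iInter.mp hX ⟨ψ, hψ⟩)
  obtain ⟨u, hu⟩ := (φ.isClopen_boolModels.compl.isClosed.isCompact).elim_finite_subfamily_closed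
    _ (fun ψ : X => (ψ : PropForm α).isClopen_boolModels.isClosed) hcover
  refine ⟨u.map (Function.Embedding.subtype _), by simp, fun v hv => ?_⟩
  classical
  by_contra hφ
  have hb : (fun a => decide (v a)) ∈ φ.boolModelsᶜ ∩ ⋂ ψ ∈ u, (ψ : PropForm α).boolModels := by
    refine ⟨by simpa [boolModels] using hφ, Set.mem_iInter₂.mpr fun ψ hψ => ?_⟩
    simpa [boolModels] using hv ψ (Finset.mem_map_of_mem _ hψ)
  rw [hu] at hb
  exact hb

end Consequence

section CnRules

variable {α : Type} {B : Set (PropForm α × PropForm α)} {W : Set (PropForm α)}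

theorem subset_CnRules : W ⊆ CnRules B W := fun _ hφ _ hS => hS.1 hφ

theorem Cn_subset_CnRules {X : Set (PropForm α)} (h : X ⊆ CnRules B W) :
    Cn X ⊆ CnRules B W :=
  fun _ hφ _ hS => hS.2.1 (Cn_mono (h.trans (Set.sInter_subset_of_mem hS)) hφ)

theorem CnRules_apply_rule {r : PropForm α × PropForm α} (hr : r ∈ B)
    (h : r.1 ∈ CnRules B W) : r.2 ∈ CnRules B W :=
  fun S hS => hS.2.2 r hr (h S hS)

theorem CnRules_subset {S : Set (PropForm α)} (hW : W ⊆ S) (hCn : Cn S ⊆ S)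
    (hB : ∀ r ∈ B, r.1 ∈ S → r.2 ∈ S) : CnRules B W ⊆ S :=
  Set.sInter_subset_of_mem ⟨hW, hCn, hB⟩

end CnRules

section GroundedChain

variable {α : Type} {D : Set (Default α)} {W T : Set (PropForm α)} {l l₁ l₂ : List (Default α)}

def conseqs (l : List (Default α)) : Set (PropForm α) := {φ | ∃ e ∈ l, e.con = φ}

theorem conseqs_mono (h : l₁ ⊆ l₂) : conseqs l₁ ⊆ conseqs l₂ :=
  fun _ ⟨e, he, hφ⟩ => ⟨e, h he, hφ⟩

/-- Chains are read from the right: the head is the last default applied. -/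
def IsGroundedChain (W : Set (PropForm α)) : List (Default α) → Prop
  | [] => True
  | d :: l => d.pre ∈ Cn (W ∪ conseqs l) ∧ IsGroundedChain W l

theorem IsGroundedChain.append :
    IsGroundedChain W l₁ → IsGroundedChain W l₂ → IsGroundedChain W (l₁ ++ l₂) := by
  induction l₁ with
  | nil => exact fun _ h₂ => h₂
  | cons d l ih =>
    rintro ⟨hd, h₁⟩ h₂
    exact ⟨Cn_mono (Set.union_subset_union_right W (conseqs_mono (List.subset_append_left _ _))) hd,
      ih h₁ h₂⟩

theorem IsGroundedChain.conseqs_subset_CnRules (hl : IsGroundedChain W l)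
    (hD : ∀ e ∈ l, e ∈ D ∧ e.Applicable T) : conseqs l ⊆ CnRules (Reduct D T) W := by
  induction l with
  | nil => rintro _ ⟨e, he, -⟩; simp at he
  | cons d l ih =>
    obtain ⟨hd, hl⟩ := hl
    have hlD : conseqs l ⊆ CnRules (Reduct D T) W :=
      ih hl fun e he => hD e (List.mem_cons_of_mem d he)
    rintro _ ⟨e, he, rfl⟩
    rcases List.mem_cons.mp he with rfl | he
    · obtain ⟨heD, happ⟩ := hD e List.mem_cons_self
      exact CnRules_apply_rule (r := (e.pre, e.con)) ⟨e, heD, happ, rfl⟩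
        (Cn_subset_CnRules (Set.union_subset subset_CnRules hlD) hd)
    · exact hlD ⟨e, he, rfl⟩

open Classical in
noncomputable def chainJus (l : List (Default α)) : Finset (PropForm α) :=
  l.toFinset.biUnion Default.jus

noncomputable def chainDefault (l : List (Default α)) (φ : PropForm α) : Default α :=
  ⟨verum, chainJus l, φ⟩

theorem chainDefault_applicable_iff {φ : PropForm α} :
    (chainDefault l φ).Applicable T ↔ ∀ e ∈ l, e.Applicable T := by
  simp only [Default.Applicable, chainDefault, chainJus, Finset.mem_biUnion, List.mem_toFinset]
  grind

variable (D W T)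

def prereqFreeVersion : Set (Default α) :=
  {d' | ∃ l, IsGroundedChain W l ∧ (∀ e ∈ l, e ∈ D) ∧ ∃ φ ∈ conseqs l, d' = chainDefault l φ}

theorem prereqFree_of_mem_prereqFreeVersion : ∀ d ∈ prereqFreeVersion D W, d.PrereqFree := by
  rintro _ ⟨l, -, -, φ, -, rfl⟩
  exact verum_mem_Cn ∅

def groundedConseqs : Set (PropForm α) :=
  {φ | ∃ l, IsGroundedChain W l ∧ (∀ e ∈ l, e ∈ D ∧ e.Applicable T) ∧ φ ∈ conseqs l}

variable {D W T}

theorem exists_groundedChain_of_finset_subset (Y : Finset (PropForm α))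
    (hY : ↑Y ⊆ W ∪ groundedConseqs D W T) :
    ∃ l, IsGroundedChain W l ∧ (∀ e ∈ l, e ∈ D ∧ e.Applicable T) ∧ ↑Y ⊆ W ∪ conseqs l := by
  classical
  induction Y using Finset.induction_on with
  | empty => exact ⟨[], trivial, by simp, by simp⟩
  | insert φ Y _ ih =>
    simp only [Finset.coe_insert, Set.insert_subset_iff] at hY ⊢
    obtain ⟨L, hL, hLD, hYL⟩ := ih hY.2
    rcases hY.1 with hφ | ⟨l, hl, hlD, hφ⟩
    · exact ⟨L, hL, hLD, Or.inl hφ, hYL⟩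
    · refine ⟨l ++ L, hl.append hL, fun e he => ?_, ?_⟩
      · rcases List.mem_append.mp he with he | he
        exacts [hlD e he, hLD e he]
      · exact ⟨Or.inr (conseqs_mono (List.subset_append_left _ _) hφ),
          hYL.trans (Set.union_subset_union_right W (conseqs_mono (List.subset_append_right _ _)))⟩

theorem CnRules_reduct_eq_Cn_groundedConseqs :
    CnRules (Reduct D T) W = Cn (W ∪ groundedConseqs D W T) := by
  refine (CnRules_subset (Set.subset_union_left.trans (subset_Cn _)) (Cn_Cn_subset _) ?_).antisymm
    (Cn_subset_CnRules (Set.union_subset subset_CnRules ?_))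
  · rintro _ ⟨d, hdD, happ, rfl⟩ hpre
    obtain ⟨Y, hYsub, hY⟩ := exists_finset_of_mem_Cn hpre
    obtain ⟨l, hl, hlD, hYl⟩ := exists_groundedChain_of_finset_subset Y hYsub
    refine subset_Cn _ (Or.inr ⟨d :: l, ⟨Cn_mono hYl hY, hl⟩, ?_, ⟨d, List.mem_cons_self, rfl⟩⟩)
    intro e he
    rcases List.mem_cons.mp he with rfl | he
    exacts [⟨hdD, happ⟩, hlD e he]
  · rintro φ ⟨l, hl, hlD, hφ⟩
    exact hl.conseqs_subset_CnRules hlD hφ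

theorem CnRules_reduct_prereqFreeVersion_eq_Cn_groundedConseqs :
    CnRules (Reduct (prereqFreeVersion D W) T) W = Cn (W ∪ groundedConseqs D W T) := by
  refine (CnRules_subset (Set.subset_union_left.trans (subset_Cn _)) (Cn_Cn_subset _) ?_).antisymm
    (Cn_subset_CnRules (Set.union_subset subset_CnRules ?_))
  · rintro _ ⟨_, ⟨l, hl, hlD, φ, hφ, rfl⟩, happ, rfl⟩ -
    refine subset_Cn _ (Or.inr ⟨l, hl, fun e he => ⟨hlD e he, ?_⟩, hφ⟩)
    exact chainDefault_applicable_iff.mp happ e he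
  · rintro φ ⟨l, hl, hlD, hφ⟩
    have hmem : chainDefault l φ ∈ prereqFreeVersion D W :=
      ⟨l, hl, fun e he => (hlD e he).1, φ, hφ, rfl⟩
    exact CnRules_apply_rule (r := (verum, φ))
      ⟨_, hmem, chainDefault_applicable_iff.mpr fun e he => (hlD e he).2, rfl⟩
      (Cn_subset_CnRules (Set.empty_subset _) (verum_mem_Cn ∅))

end GroundedChain

theorem prereq_free_equivalent_general {α : Type}
    (D : Set (Default α)) (W : Set (PropForm α)) :
    ∃ (D' : Set (Default α)) (W' : Set (PropForm α)),
      (∀ d ∈ D', d.PrereqFree) ∧ ext D' W' = ext D W := by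
  refine ⟨prereqFreeVersion D W, W, prereqFree_of_mem_prereqFreeVersion D W, ?_⟩
  ext T
  change T = _ ↔ T = _
  rw [CnRules_reduct_prereqFreeVersion_eq_Cn_groundedConseqs, CnRules_reduct_eq_Cn_groundedConseqs]

/-- every default theory has an equivalent prerequisite-free default theory. -/
theorem prereq_free_equivalent {α : Type} [Denumerable α]
    (D : Set (Default α)) (W : Set (PropForm α)) :
    ∃ (D' : Set (Default α)) (W' : Set (PropForm α)),
      (∀ d ∈ D', d.PrereqFree) ∧ ext D' W' = ext D W :=
  prereq_free_equivalent_general D W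
end

section
/- Let p_0, p_1, … be pairwise distinct propositional atoms. Every infinite subfamily of { Cn({p_i}) : i ∈ ℕ } fails to be representable by a default theory: if I ⊆ ℕ is infinite, there is no default theory (D,W) with ext(D,W) = { Cn({p_i}) : i ∈ I }. -/
section Aux

open PropForm

variable {α : Type}

/-! ### Basic `Cn` lemmas -/

lemma subset_cn (S : Set (PropForm α)) : S ⊆ Cn S := fun φ hφ v hv => hv φ hφ

lemma cn_mono {S T : Set (PropForm α)} (h : S ⊆ T) : Cn S ⊆ Cn T :=
  fun φ hφ v hv => hφ v (fun ψ hψ => hv ψ (h hψ))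

lemma cn_idem (S : Set (PropForm α)) : Cn (Cn S) = Cn S := by
  apply subset_antisymm
  · exact fun φ hφ v hv => hφ v (fun ψ hψ => hψ v hv)
  · exact subset_cn _

/-! ### Bool-valued valuations and compactness -/

def bval (w : α → Bool) : α → Prop := fun a => w a = true

lemma eval_congr {v v' : α → Prop} (h : ∀ a, v a ↔ v' a) (φ : PropForm α) :
    φ.eval v ↔ φ.eval v' := by
  induction φ with
  | atom a => exact h a
  | fls => rfl
  | impl φ ψ ihφ ihψ => simp only [PropForm.eval]; rw [ihφ, ihψ]

lemma mem_cn_iff_bool {S : Set (PropForm α)} {φ : PropForm α} :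
    φ ∈ Cn S ↔ ∀ w : α → Bool, (∀ ψ ∈ S, ψ.eval (bval w)) → φ.eval (bval w) := by
  constructor
  · exact fun h w hw => h (bval w) hw
  · intro h v hv
    classical
    set w : α → Bool := fun a => decide (v a) with hwdef
    have hb : ∀ a, v a ↔ bval w a := by
      intro a; simp [bval, hwdef]
    have := h w (fun ψ hψ => (eval_congr hb ψ).mp (hv ψ hψ))
    exact (eval_congr hb φ).mpr this

lemma isClopen_models (φ : PropForm α) : IsClopen {w : α → Bool | φ.eval (bval w)} := by
  induction φ with
  | atom a =>
      have : {w : α → Bool | (atom a).eval (bval w)} = (fun w : α → Bool => w a) ⁻¹' {true} := by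
        ext w; simp [PropForm.eval, bval]
      rw [this]
      exact (isClopen_discrete _).preimage (continuous_apply a)
  | fls =>
      have : {w : α → Bool | (fls : PropForm α).eval (bval w)} = ∅ := by
        ext w; simp [PropForm.eval]
      rw [this]; exact isClopen_empty
  | impl φ ψ ihφ ihψ =>
      have : {w : α → Bool | (impl φ ψ).eval (bval w)} =
          {w : α → Bool | φ.eval (bval w)}ᶜ ∪ {w : α → Bool | ψ.eval (bval w)} := by
        ext w; simp only [Set.mem_setOf_eq, Set.mem_union, Set.mem_compl_iff, PropForm.eval]
        tauto
      rw [this]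
      exact ihφ.compl.union ihψ

/-- Compactness of propositional consequence. -/
lemma cn_compact {S : Set (PropForm α)} {φ : PropForm α} (h : φ ∈ Cn S) :
    ∃ F : Finset (PropForm α), ↑F ⊆ S ∧ φ ∈ Cn (↑F : Set (PropForm α)) := by
  classical
  set s : Set (α → Bool) := {w | φ.eval (bval w)}ᶜ with hs
  have hscomp : IsCompact s := ((isClopen_models φ).compl.isClosed).isCompact
  set t : S → Set (α → Bool) := fun ψ => {w | (ψ : PropForm α).eval (bval w)} with ht
  have hcl : ∀ ψ : S, IsClosed (t ψ) := fun ψ => (isClopen_models _).isClosed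
  have hempty : s ∩ ⋂ ψ : S, t ψ = ∅ := by
    ext w
    simp only [Set.mem_inter_iff, Set.mem_iInter, Set.mem_empty_iff_false, iff_false, not_and,
      hs, Set.mem_compl_iff, Set.mem_setOf_eq, not_forall]
    intro hw
    by_contra hq
    push_neg at hq
    exact hw (mem_cn_iff_bool.mp h w (fun ψ hψ => hq ⟨ψ, hψ⟩))
  obtain ⟨u, hu⟩ := hscomp.elim_finite_subfamily_closed t hcl hempty
  refine ⟨u.image Subtype.val, ?_, ?_⟩
  · intro ψ hψ
    simp only [Finset.coe_image, Set.mem_image, Finset.mem_coe] at hψ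
    obtain ⟨ψ', _, rfl⟩ := hψ
    exact ψ'.2
  · rw [mem_cn_iff_bool]
    intro w hw
    by_contra hwφ
    have : w ∈ s ∩ ⋂ ψ ∈ u, t ψ := by
      refine ⟨hwφ, ?_⟩
      simp only [Set.mem_iInter]
      intro ψ hψ
      exact hw ψ (by simp only [Finset.coe_image, Set.mem_image, Finset.mem_coe]; exact ⟨ψ, hψ, rfl⟩)
    rw [hu] at this
    exact this

/-! ### `CnRules` lemmas -/

lemma cnRules_closed (B : Set (PropForm α × PropForm α)) (W : Set (PropForm α)) :
    W ⊆ CnRules B W ∧ Cn (CnRules B W) ⊆ CnRules B W ∧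
      ∀ r ∈ B, r.1 ∈ CnRules B W → r.2 ∈ CnRules B W := by
  refine ⟨?_, ?_, ?_⟩
  · intro φ hφ
    exact Set.subset_sInter (fun S hS => hS.1) hφ
  · intro φ hφ S hS
    exact hS.2.1 (cn_mono (Set.sInter_subset_of_mem hS) hφ)
  · intro r hr h1 S hS
    exact hS.2.2 r hr (h1 S hS)

lemma cnRules_least {B : Set (PropForm α × PropForm α)} {W S : Set (PropForm α)}
    (h1 : W ⊆ S) (h2 : Cn S ⊆ S) (h3 : ∀ r ∈ B, r.1 ∈ S → r.2 ∈ S) :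
    CnRules B W ⊆ S :=
  Set.sInter_subset_of_mem ⟨h1, h2, h3⟩

lemma cnRules_mono {B B' : Set (PropForm α × PropForm α)} (h : B ⊆ B')
    (W : Set (PropForm α)) : CnRules B W ⊆ CnRules B' W := by
  refine cnRules_least (cnRules_closed B' W).1 (cnRules_closed B' W).2.1 ?_
  intro r hr
  exact (cnRules_closed B' W).2.2 r (h hr)

/-- Finiteness of derivations: anything in `CnRules B W` is in `CnRules B₀ W` for
some finite `B₀ ⊆ B`. -/
lemma cnRules_finite {B : Set (PropForm α × PropForm α)} {W : Set (PropForm α)}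
    {φ : PropForm α} (h : φ ∈ CnRules B W) :
    ∃ B₀ : Finset (PropForm α × PropForm α), ↑B₀ ⊆ B ∧
      φ ∈ CnRules (↑B₀ : Set (PropForm α × PropForm α)) W := by
  classical
  set U : Set (PropForm α) :=
    {ψ | ∃ B₀ : Finset (PropForm α × PropForm α), ↑B₀ ⊆ B ∧
      ψ ∈ CnRules (↑B₀ : Set (PropForm α × PropForm α)) W} with hU
  have hWU : W ⊆ U := by
    intro ψ hψ
    exact ⟨∅, by simp, (cnRules_closed _ _).1 hψ⟩
  have hCnU : Cn U ⊆ U := by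
    intro ψ hψ
    obtain ⟨F, hFU, hF⟩ := cn_compact hψ
    have hch : ∀ χ : F, ∃ B₀ : Finset (PropForm α × PropForm α), ↑B₀ ⊆ B ∧
        (χ : PropForm α) ∈ CnRules (↑B₀ : Set (PropForm α × PropForm α)) W :=
      fun χ => hFU χ.2
    choose g hg1 hg2 using hch
    set B₀ : Finset (PropForm α × PropForm α) := Finset.univ.biUnion g with hB₀
    refine ⟨B₀, ?_, ?_⟩
    · intro r hr
      simp only [hB₀, Finset.mem_coe, Finset.mem_biUnion, Finset.mem_univ, true_and] at hr
      obtain ⟨χ, hχ⟩ := hr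
      exact hg1 χ hχ
    · have hFsub : (↑F : Set (PropForm α)) ⊆ CnRules (↑B₀ : Set (PropForm α × PropForm α)) W := by
        intro χ hχ
        have hsub : (↑(g ⟨χ, hχ⟩) : Set (PropForm α × PropForm α)) ⊆ ↑B₀ := by
          intro r hr
          simp only [hB₀, Finset.mem_coe, Finset.mem_biUnion, Finset.mem_univ, true_and]
          exact ⟨⟨χ, hχ⟩, hr⟩
        exact cnRules_mono hsub W (hg2 ⟨χ, hχ⟩)
      exact (cnRules_closed _ _).2.1 (cn_mono hFsub hF)
  have hrules : ∀ r ∈ B, r.1 ∈ U → r.2 ∈ U := by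
    rintro r hr ⟨B₀, hB₀, h1⟩
    refine ⟨insert r B₀, ?_, ?_⟩
    · intro x hx
      simp only [Finset.coe_insert, Set.mem_insert_iff] at hx
      rcases hx with rfl | hx
      · exact hr
      · exact hB₀ hx
    · refine (cnRules_closed _ _).2.2 r (by simp) ?_
      exact cnRules_mono (by intro x hx; simp [hx]) W h1
  exact cnRules_least hWU hCnU hrules h

/-! ### Occurring atoms -/

def occurs (a : α) : PropForm α → Prop
  | .atom b => a = b
  | .fls => False
  | .impl φ ψ => occurs a φ ∨ occurs a ψ

lemma occurs_finite (φ : PropForm α) : {a | occurs a φ}.Finite := by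
  induction φ with
  | atom b =>
      have : {a | occurs a (atom b)} = {b} := by ext a; simp [occurs]
      rw [this]; exact Set.finite_singleton b
  | fls =>
      have : {a : α | occurs a fls} = ∅ := by ext a; simp [occurs]
      rw [this]; exact Set.finite_empty
  | impl φ ψ ihφ ihψ =>
      have : {a | occurs a (impl φ ψ)} = {a | occurs a φ} ∪ {a | occurs a ψ} := by
        ext a; simp [occurs]
      rw [this]; exact ihφ.union ihψ

lemma eval_eq_of_agree {v v' : α → Prop} (φ : PropForm α)
    (h : ∀ a, occurs a φ → (v a ↔ v' a)) : φ.eval v ↔ φ.eval v' := by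
  induction φ with
  | atom a => exact h a rfl
  | fls => rfl
  | impl φ ψ ihφ ihψ =>
      simp only [PropForm.eval]
      rw [ihφ (fun a ha => h a (Or.inl ha)), ihψ (fun a ha => h a (Or.inr ha))]

lemma eval_neg {v : α → Prop} (φ : PropForm α) : (PropForm.neg φ).eval v ↔ ¬ φ.eval v := by
  simp [PropForm.neg, PropForm.eval]

end Aux


/-- no infinite subfamily of `{ Cn({p_i}) : i ∈ ℕ }` is representable. -/
theorem atoms_subfamily_not_representable {α : Type} [Denumerable α]
    (p : ℕ → α) (hp : Function.Injective p)
    (I : Set ℕ) (hI : I.Infinite) :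
    ¬ ∃ (D : Set (Default α)) (W : Set (PropForm α)),
        ext D W = {T | ∃ i ∈ I, T = Cn {PropForm.atom (p i)}} := by
  classical
  rintro ⟨D, W, h⟩
  obtain ⟨i, hi⟩ := hI.nonempty
  set Si : Set (PropForm α) := Cn {PropForm.atom (p i)} with hSidef
  have hSiext : IsExtension D W Si := by
    have : Si ∈ ext D W := by rw [h]; exact ⟨i, hi, rfl⟩
    exact this
  have hatom : PropForm.atom (p i) ∈ Si := fun v hv => hv _ rfl
  have hmem : PropForm.atom (p i) ∈ CnRules (Reduct D Si) W := hSiext ▸ hatom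
  obtain ⟨B₀, hB₀, hder⟩ := cnRules_finite hmem
  -- choose defaults witnessing the rules in B₀
  have hex : ∀ r : ↥B₀, ∃ d ∈ D, d.Applicable Si ∧ (r : PropForm α × PropForm α) = (d.pre, d.con) :=
    fun r => hB₀ r.2
  choose d hdD hdap hdr using hex
  -- the finite set of atoms occurring in justifications of chosen defaults
  set A : Set α := ⋃ r : ↥B₀, ⋃ γ ∈ (d r).jus, {a | occurs a γ} with hAdef
  have hA : A.Finite :=
    Set.finite_iUnion fun r =>
      Set.Finite.biUnion (d r).jus.finite_toSet (fun γ _ => occurs_finite γ)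
  -- pick j ∈ I with j ≠ i and p j ∉ A
  have hfin : ((p ⁻¹' A) ∪ {i}).Finite :=
    (hA.preimage hp.injOn).union (Set.finite_singleton i)
  obtain ⟨j, hjmem⟩ := (hI.diff hfin).nonempty
  have hjI : j ∈ I := hjmem.1
  have hji : j ≠ i := by
    intro hcontra
    exact hjmem.2 (Or.inr (by simp [hcontra]))
  have hpjA : p j ∉ A := fun hcontra => hjmem.2 (Or.inl hcontra)
  set Sj : Set (PropForm α) := Cn {PropForm.atom (p j)} with hSjdef
  have hSjext : IsExtension D W Sj := by
    have : Sj ∈ ext D W := by rw [h]; exact ⟨j, hjI, rfl⟩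
    exact this
  -- the chosen defaults are applicable w.r.t. Sj
  have hsub : (↑B₀ : Set (PropForm α × PropForm α)) ⊆ Reduct D Sj := by
    intro r hr
    refine ⟨d ⟨r, hr⟩, hdD ⟨r, hr⟩, ?_, hdr ⟨r, hr⟩⟩
    intro γ hγ hneg
    -- from applicability w.r.t. Si: γ.neg ∉ Cn Si = Cn {atom (p i)}
    have hnotSi : γ.neg ∉ Cn {PropForm.atom (p i)} := by
      have := hdap ⟨r, hr⟩ γ hγ
      rwa [hSidef, cn_idem] at this
    -- so there is a valuation making p i true and γ true
    rw [Cn, Set.mem_setOf_eq] at hnotSi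
    push_neg at hnotSi
    obtain ⟨v, hv1, hv2⟩ := hnotSi
    have hγv : γ.eval v := by
      by_contra hc
      exact hv2 ((eval_neg γ).mpr hc)
    -- modify v at p j
    set v' : α → Prop := fun a => if a = p j then True else v a with hv'def
    have hagree : γ.eval v' ↔ γ.eval v := by
      refine eval_eq_of_agree γ (fun a ha => ?_)
      have hane : a ≠ p j := by
        intro hcontra
        apply hpjA
        rw [hAdef]
        refine Set.mem_iUnion.mpr ⟨⟨r, hr⟩, ?_⟩
        refine Set.mem_iUnion.mpr ⟨γ, ?_⟩
        exact Set.mem_iUnion.mpr ⟨hγ, hcontra ▸ ha⟩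
      simp [hv'def, hane]
    -- γ.neg ∈ Cn Sj = Cn {atom p j}, evaluate at v'
    have hnegSj : γ.neg ∈ Cn {PropForm.atom (p j)} := by
      rwa [hSjdef, cn_idem] at hneg
    have : (PropForm.neg γ).eval v' := by
      refine hnegSj v' ?_
      intro ψ hψ
      rw [Set.mem_singleton_iff] at hψ
      subst hψ
      show v' (p j)
      simp [hv'def]
    rw [eval_neg] at this
    exact this (hagree.mpr hγv)
  -- hence atom (p i) ∈ Sj, contradiction
  have hfinal : PropForm.atom (p i) ∈ Sj := by
    rw [hSjext]
    exact cnRules_mono hsub W hder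
  have : (PropForm.atom (p i)).eval (fun a => a = p j) := by
    refine hfinal (fun a => a = p j) ?_
    intro ψ hψ
    rw [Set.mem_singleton_iff] at hψ
    subst hψ
    show p j = p j
    rfl
  have h2 : p i = p j := this
  exact hji (hp h2).symm
end
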